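/- arXiv:2202.02462 — 6 statements merged into one kernel-verified Lean document; each statement's English description precedes it below -/
import Mathlib

section
/- In the two-type linear-loss setting, the supremum of Proposer's expected payoff (1−μ₀)·a_l + μ₀·a_h over all pairs (a_l,a_h)∈[0,1]² that are incentive compatible (u_V(a_l,l) ≥ u_V(a_h,l) and u_V(a_h,h) ≥ u_V(a_l,h)) and individually rational (u_V(a_l,l) ≥ 0 and u_V(a_h,h) ≥ 0) equals max{2l, (1−μ₀)(2h−1)+μ₀}, and this value is attained (by the pooling pair (2l,2l) and by the separating pair (2h−1,1), respectively). Moreover, μ* := (2l−2h+1)/(2−2h) lies in (0,1), and the separating value (1−μ₀)(2h−1)+μ₀ strictly exceeds the pooling value 2l if and only if μ₀ > μ*. -/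
noncomputable section

/-- Linear-loss Vetoer utility: `u_V(a,v) = v - |v - a|`. -/
def uVlin (a v : ℝ) : ℝ := v - |v - a|

/-- Feasibility of a pair `(a_l, a_h) ∈ [0,1]²`: incentive compatibility
and individual rationality for the two types `l` and `h`. -/
def Feasible (l h al ah : ℝ) : Prop :=
  al ∈ Set.Icc (0:ℝ) 1 ∧ ah ∈ Set.Icc (0:ℝ) 1 ∧
  uVlin ah l ≤ uVlin al l ∧ uVlin al h ≤ uVlin ah h ∧
  0 ≤ uVlin al l ∧ 0 ≤ uVlin ah h

theorem stmt0 (l h μ₀ : ℝ)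
    (hl : 0 < l) (hl2 : l < 1/2) (hh : 1/2 < h) (hh2 : h < 2*l) (h2l : 2*l < 1)
    (hμ : μ₀ ∈ Set.Icc (0:ℝ) 1) :
    IsGreatest {x : ℝ | ∃ al ah : ℝ, Feasible l h al ah ∧ x = (1 - μ₀) * al + μ₀ * ah}
      (max (2*l) ((1 - μ₀) * (2*h - 1) + μ₀)) ∧
    (Feasible l h (2*l) (2*l) ∧ (1 - μ₀) * (2*l) + μ₀ * (2*l) = 2*l) ∧
    (Feasible l h (2*h - 1) 1 ∧
      (1 - μ₀) * (2*h - 1) + μ₀ * 1 = (1 - μ₀) * (2*h - 1) + μ₀) ∧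
    (2*l - 2*h + 1) / (2 - 2*h) ∈ Set.Ioo (0:ℝ) 1 ∧
    (2*l < (1 - μ₀) * (2*h - 1) + μ₀ ↔ (2*l - 2*h + 1) / (2 - 2*h) < μ₀) := by
  obtain ⟨hμ0, hμ1⟩ := hμ
  have hh1 : h < 1 := by linarith
  -- pooling pair is feasible
  have hfp : Feasible l h (2*l) (2*l) := by
    unfold Feasible uVlin
    have e1 : |l - 2*l| = l := by rw [abs_of_nonpos (by linarith)]; ring
    have e2 : |h - 2*l| = 2*l - h := by rw [abs_of_nonpos (by linarith)]; ring
    refine ⟨⟨by linarith, by linarith⟩, ⟨by linarith, by linarith⟩, le_refl _, le_refl _,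
      by rw [e1]; linarith, by rw [e2]; linarith⟩
  -- separating pair is feasible
  have hfs : Feasible l h (2*h - 1) 1 := by
    unfold Feasible uVlin
    have e1 : |l - (2*h - 1)| ≤ l := abs_le.mpr ⟨by linarith, by linarith⟩
    have e2 : |l - 1| = 1 - l := by rw [abs_of_nonpos (by linarith)]; ring
    have e3 : |h - 1| = 1 - h := by rw [abs_of_nonpos (by linarith)]; ring
    have e4 : |h - (2*h - 1)| = 1 - h := by rw [abs_of_nonneg (by linarith)]; ring
    refine ⟨⟨by linarith, by linarith⟩, ⟨by linarith, by linarith⟩,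
      by rw [e2]; linarith, by rw [e3, e4], by linarith, by rw [e3]; linarith⟩
  -- upper bound
  have hub : ∀ al ah : ℝ, Feasible l h al ah →
      (1 - μ₀) * al + μ₀ * ah ≤ max (2*l) ((1 - μ₀) * (2*h - 1) + μ₀) := by
    rintro al ah ⟨⟨hal0, hal1⟩, ⟨hah0, hah1⟩, hICl, hICh, hIRl, hIRh⟩
    unfold uVlin at hICl hICh hIRl hIRh
    have h1 : |l - al| ≤ l := by linarith
    have hal2l : al ≤ 2*l := by have := (abs_le.mp h1).1; linarith
    by_cases hcase : ah ≤ 2*l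
    · exact le_max_of_le_left (by nlinarith)
    · push_neg at hcase
      have hhah : |h - ah| = ah - h := by rw [abs_of_nonpos (by linarith)]; ring
      have hICh' : ah - h ≤ |h - al| := by rw [hhah] at hICh; linarith
      have halh : al < h := by
        by_contra hc
        push_neg at hc
        rw [abs_of_nonpos (by linarith)] at hICh'
        linarith
      rw [abs_of_nonneg (by linarith)] at hICh'
      -- al + ah ≤ 2h
      by_cases hc2 : al ≤ 2*h - 1
      · refine le_max_of_le_right ?_
        nlinarith
      · push_neg at hc2
        by_cases hc3 : μ₀ ≤ 1/2
        · refine le_max_of_le_left ?_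
          nlinarith [mul_nonneg (by linarith : (0:ℝ) ≤ 1 - μ₀) (by linarith : (0:ℝ) ≤ 2*h - ah - al),
            mul_nonneg (by linarith : (0:ℝ) ≤ 1 - 2*μ₀) (by linarith : (0:ℝ) ≤ ah - 2*l),
            mul_nonneg (by linarith : (0:ℝ) ≤ 1 - μ₀) (by linarith : (0:ℝ) ≤ 4*l - 2*h)]
        · push_neg at hc3
          refine le_max_of_le_right ?_
          nlinarith [mul_nonneg (by linarith : (0:ℝ) ≤ μ₀) (by linarith : (0:ℝ) ≤ 2*h - ah - al),
            mul_nonneg (by linarith : (0:ℝ) ≤ 2*μ₀ - 1) (by linarith : (0:ℝ) ≤ al - (2*h - 1))]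
  refine ⟨⟨?_, ?_⟩, ⟨hfp, by ring⟩, ⟨hfs, by ring⟩, ⟨?_, ?_⟩, ?_⟩
  · -- membership
    rcases le_total ((1 - μ₀) * (2*h - 1) + μ₀) (2*l) with hle | hle
    · exact ⟨2*l, 2*l, hfp, by rw [max_eq_left hle]; ring⟩
    · exact ⟨2*h - 1, 1, hfs, by rw [max_eq_right hle]; ring⟩
  · rintro x ⟨al, ah, hf, rfl⟩
    exact hub al ah hf
  · exact div_pos (by linarith) (by linarith)
  · rw [div_lt_one (by linarith)]; linarith
  · rw [div_lt_iff₀ (by linarith : (0:ℝ) < 2 - 2*h)]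
    constructor <;> intro hx <;> nlinarith
end
end

section
/- In the two-type linear-loss setting with μ₀∈(0,1), for each δ∈(0,1) let t(δ) := min{t∈ℕ : δ^t·(2h−2l) ≤ 2h−1}. Then t(δ) is well defined with t(δ)≥1, lim_{δ→1⁻} δ^{t(δ)} = (2h−1)/(2h−2l), hence lim_{δ→1⁻} [μ₀ + (1−μ₀)·δ^{t(δ)}·2l] = μ₀ + (1−μ₀)·(2h−1)·l/(h−l), and this limit is strictly greater than μ₀ + (1−μ₀)(2h−1), which is Proposer's payoff from the separating menu {2h−1, 1}. -/
noncomputable section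

theorem stmt1 (l h μ₀ : ℝ)
    (hl : 0 < l) (hl2 : l < 1/2) (hh : 1/2 < h) (hh2 : h < 2*l) (h2l : 2*l < 1)
    (hμ : μ₀ ∈ Set.Ioo (0:ℝ) 1) :
    -- t(δ) is well defined (the defining set is nonempty) and t(δ) ≥ 1
    (∀ δ ∈ Set.Ioo (0:ℝ) 1,
      {t : ℕ | δ ^ t * (2*h - 2*l) ≤ 2*h - 1}.Nonempty ∧
      1 ≤ sInf {t : ℕ | δ ^ t * (2*h - 2*l) ≤ 2*h - 1}) ∧
    -- lim_{δ→1⁻} δ^{t(δ)} = (2h−1)/(2h−2l)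
    Filter.Tendsto (fun δ : ℝ => δ ^ sInf {t : ℕ | δ ^ t * (2*h - 2*l) ≤ 2*h - 1})
      (nhdsWithin 1 (Set.Iio 1)) (nhds ((2*h - 1) / (2*h - 2*l))) ∧
    -- hence lim_{δ→1⁻} [μ₀ + (1−μ₀)·δ^{t(δ)}·2l] = μ₀ + (1−μ₀)·(2h−1)·l/(h−l)
    Filter.Tendsto
      (fun δ : ℝ => μ₀ + (1 - μ₀) * δ ^ sInf {t : ℕ | δ ^ t * (2*h - 2*l) ≤ 2*h - 1} * (2*l))
      (nhdsWithin 1 (Set.Iio 1)) (nhds (μ₀ + (1 - μ₀) * (2*h - 1) * l / (h - l))) ∧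
    -- and this limit strictly exceeds the separating-menu payoff μ₀ + (1−μ₀)(2h−1)
    μ₀ + (1 - μ₀) * (2*h - 1) < μ₀ + (1 - μ₀) * (2*h - 1) * l / (h - l) := by
  have hnum : (0:ℝ) < 2*h - 1 := by linarith
  have hden : (0:ℝ) < 2*h - 2*l := by linarith
  have hcd : (2*h - 1) < 2*h - 2*l := by linarith
  set c : ℝ := (2*h - 1) / (2*h - 2*l) with hc
  have hc0 : 0 < c := div_pos hnum hden
  have hc1 : c < 1 := (div_lt_one hden).mpr hcd
  -- membership in the set ↔ δ^t ≤ c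
  have hmem : ∀ δ : ℝ, ∀ t : ℕ,
      (t ∈ {t : ℕ | δ ^ t * (2*h - 2*l) ≤ 2*h - 1}) ↔ δ ^ t ≤ c := by
    intro δ t
    rw [Set.mem_setOf_eq, hc, le_div_iff₀ hden]
  have hne : ∀ δ ∈ Set.Ioo (0:ℝ) 1,
      {t : ℕ | δ ^ t * (2*h - 2*l) ≤ 2*h - 1}.Nonempty := by
    intro δ hδ
    obtain ⟨t, ht⟩ := exists_pow_lt_of_lt_one hc0 hδ.2
    exact ⟨t, (hmem δ t).mpr ht.le⟩
  have hge1 : ∀ δ ∈ Set.Ioo (0:ℝ) 1,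
      1 ≤ sInf {t : ℕ | δ ^ t * (2*h - 2*l) ≤ 2*h - 1} := by
    intro δ hδ
    rw [Nat.one_le_iff_ne_zero]
    intro h0
    have hm := Nat.sInf_mem (hne δ hδ)
    rw [h0, hmem δ 0, pow_zero] at hm
    linarith
  -- bounds: c*δ < δ^{T δ} ≤ c for δ ∈ (0,1)
  have hbounds : ∀ δ ∈ Set.Ioo (0:ℝ) 1,
      c * δ ≤ δ ^ sInf {t : ℕ | δ ^ t * (2*h - 2*l) ≤ 2*h - 1} ∧
      δ ^ sInf {t : ℕ | δ ^ t * (2*h - 2*l) ≤ 2*h - 1} ≤ c := by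
    intro δ hδ
    set T := sInf {t : ℕ | δ ^ t * (2*h - 2*l) ≤ 2*h - 1} with hT
    have hTmem := Nat.sInf_mem (hne δ hδ)
    have hub : δ ^ T ≤ c := (hmem δ T).mp hTmem
    have hT1 := hge1 δ hδ
    have hnot : ¬ ((T - 1) ∈ {t : ℕ | δ ^ t * (2*h - 2*l) ≤ 2*h - 1}) :=
      Nat.notMem_of_lt_sInf (by omega)
    rw [hmem δ (T-1)] at hnot
    push_neg at hnot
    have : δ ^ T = δ ^ (T - 1) * δ := by
      rw [← pow_succ]
      congr 1
      omega
    have hlow : c * δ ≤ δ ^ T := by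
      rw [this]
      have := mul_le_mul_of_nonneg_right hnot.le hδ.1.le
      linarith
    exact ⟨hlow, hub⟩
  have hIoo : Set.Ioo (0:ℝ) 1 ∈ nhdsWithin (1:ℝ) (Set.Iio 1) :=
    Ioo_mem_nhdsLT_of_mem (by constructor <;> norm_num)
  -- squeeze for the second claim
  have htend : Filter.Tendsto (fun δ : ℝ => δ ^ sInf {t : ℕ | δ ^ t * (2*h - 2*l) ≤ 2*h - 1})
      (nhdsWithin 1 (Set.Iio 1)) (nhds c) := by
    have hlo : Filter.Tendsto (fun δ : ℝ => c * δ) (nhdsWithin 1 (Set.Iio 1)) (nhds c) := by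
      have : Filter.Tendsto (fun δ : ℝ => c * δ) (nhds 1) (nhds (c * 1)) :=
        (continuous_const.mul continuous_id).tendsto 1
      rw [mul_one] at this
      exact this.mono_left nhdsWithin_le_nhds
    refine tendsto_of_tendsto_of_tendsto_of_le_of_le' hlo tendsto_const_nhds ?_ ?_
    · filter_upwards [hIoo] with δ hδ using (hbounds δ hδ).1
    · filter_upwards [hIoo] with δ hδ using (hbounds δ hδ).2
  refine ⟨fun δ hδ => ⟨hne δ hδ, hge1 δ hδ⟩, htend, ?_, ?_⟩
  · have hval : μ₀ + (1 - μ₀) * c * (2*l) = μ₀ + (1 - μ₀) * (2*h - 1) * l / (h - l) := by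
      rw [hc]
      have : h - l ≠ 0 := by linarith
      field_simp
    rw [← hval]
    exact tendsto_const_nhds.add ((htend.const_mul _).mul_const _)
  · have hμ1 : 0 < 1 - μ₀ := by linarith [hμ.2]
    rw [mul_div_assoc]
    have : (1:ℝ) < l / (h - l) := by
      rw [lt_div_iff₀ (by linarith : (0:ℝ) < h - l)]
      linarith
    have hpos : 0 < (1 - μ₀) * (2*h - 1) := by positivity
    nlinarith
end
end

section
/- Fix δ∈(0,1) and two lotteries λ₁,λ₂ over time-stamped actions whose discounted first and second moments ∫δ^t a dλᵢ and ∫δ^t a² dλᵢ are finite, and let D(v) denote type v's expected payoff from λ₁ minus that from λ₂. If v₁<v₂<v₃, D(v₂)=0, and D(v₃)>0, then D(v₁)<0 (single-crossing expectational differences for quadratic loss). -/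
open MeasureTheory

noncomputable section

/-- Quadratic-loss Vetoer utility normalized at the status quo:
`u_V(a,v) = -(v-a)² + v²`. -/
def uV (a v : ℝ) : ℝ := -(v - a)^2 + v^2

/-- Type `v`'s expected payoff from a lottery `lam` over time-stamped actions
(a measure on `ℝ × ℕ` of total mass at most one; the missing mass is perpetual
disagreement, which contributes zero). -/
def payoff (δ : ℝ) (lam : Measure (ℝ × ℕ)) (v : ℝ) : ℝ :=
  ∫ p : ℝ × ℕ, δ ^ p.2 * uV p.1 v ∂lam

lemma payoff_eq (δ : ℝ) (lam : Measure (ℝ × ℕ)) (v : ℝ)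
    (hB : Integrable (fun p : ℝ × ℕ => δ ^ p.2 * p.1) lam)
    (hC : Integrable (fun p : ℝ × ℕ => δ ^ p.2 * p.1 ^ 2) lam) :
    payoff δ lam v = 2 * v * (∫ p : ℝ × ℕ, δ ^ p.2 * p.1 ∂lam)
      - ∫ p : ℝ × ℕ, δ ^ p.2 * p.1 ^ 2 ∂lam := by
  have h : (fun p : ℝ × ℕ => δ ^ p.2 * uV p.1 v)
      = fun p : ℝ × ℕ => 2 * v * (δ ^ p.2 * p.1) - δ ^ p.2 * p.1 ^ 2 := by
    funext p; simp only [uV]; ring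
  rw [payoff, h, integral_sub (hB.const_mul _) hC, integral_const_mul]

/-- Single-crossing expectational differences for quadratic loss. -/
theorem stmt4 (δ : ℝ) (hδ : δ ∈ Set.Ioo (0:ℝ) 1)
    (lam₁ lam₂ : Measure (ℝ × ℕ))
    (hmass₁ : lam₁ Set.univ ≤ 1) (hmass₂ : lam₂ Set.univ ≤ 1)
    (hB₁ : Integrable (fun p : ℝ × ℕ => δ ^ p.2 * p.1) lam₁)
    (hC₁ : Integrable (fun p : ℝ × ℕ => δ ^ p.2 * p.1 ^ 2) lam₁)
    (hB₂ : Integrable (fun p : ℝ × ℕ => δ ^ p.2 * p.1) lam₂)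
    (hC₂ : Integrable (fun p : ℝ × ℕ => δ ^ p.2 * p.1 ^ 2) lam₂)
    (v₁ v₂ v₃ : ℝ) (h12 : v₁ < v₂) (h23 : v₂ < v₃)
    (hD2 : payoff δ lam₁ v₂ - payoff δ lam₂ v₂ = 0)
    (hD3 : 0 < payoff δ lam₁ v₃ - payoff δ lam₂ v₃) :
    payoff δ lam₁ v₁ - payoff δ lam₂ v₁ < 0 := by
  rw [payoff_eq δ lam₁ _ hB₁ hC₁, payoff_eq δ lam₂ _ hB₂ hC₂] at hD2 hD3 ⊢
  nlinarith [hD2, hD3, h12, h23]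
end
end

section
/- Suppose (R,P) supports a skimming equilibrium on [v̲,v*], where δ∈(0,1), F is continuous and strictly increasing on [v̲,v*], and u is increasing and strictly positive on an interval containing the range of the increasing envelope P̄. Then for every v∈[v̲,v*] and every pair z,y ∈ T(v) with z < y, it holds that P̄(z) < P̄(y). -/
noncomputable section

/-- The increasing envelope `P̄(y) := sup_{v̲ ≤ z ≤ y} P(z)` of `P`. -/
noncomputable def env (vlo : ℝ) (P : ℝ → ℝ) (y : ℝ) : ℝ :=
  sSup (P '' Set.Icc vlo y)

/-- The objective in the Bellman equation (1):
`u(P̄(y))·(F(v) − F(y)) + δ·R(y)`. -/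
noncomputable def bellObj (δ : ℝ) (u F : ℝ → ℝ) (vlo : ℝ) (R P : ℝ → ℝ) (v y : ℝ) : ℝ :=
  u (env vlo P y) * (F v - F y) + δ * R y

/-- The set `T(v)` of maximizers of the Bellman objective over `y ∈ [v̲, v]`. -/
noncomputable def argmaxT (δ : ℝ) (u F : ℝ → ℝ) (vlo : ℝ) (R P : ℝ → ℝ) (v : ℝ) : Set ℝ :=
  {y ∈ Set.Icc vlo v | ∀ z ∈ Set.Icc vlo v,
    bellObj δ u F vlo R P v z ≤ bellObj δ u F vlo R P v y}

/-- `(R,P)` supports a skimming equilibrium on `[v̲, v*]`: `R` is continuous,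
`P` is right-continuous, and for every `v ∈ [v̲,v*]`, (1) `R(v)` is the maximum
of the Bellman objective over `[v̲,v]` (the maximum being attained, with
`t(v) = max T(v)` well defined), and (2) `P(v)` is the largest solution of the
indifference condition `u_V(P(v),v) = δ·u_V(P̄(t(v)),v)`. -/
def SupportsSkimming (δ : ℝ) (u F : ℝ → ℝ) (vlo vhi : ℝ) (R P : ℝ → ℝ) : Prop :=
  ContinuousOn R (Set.Icc vlo vhi) ∧
  (∀ v ∈ Set.Icc vlo vhi, ContinuousWithinAt P (Set.Icc v vhi) v) ∧
  ∀ v ∈ Set.Icc vlo vhi,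
    (∀ y ∈ argmaxT δ u F vlo R P v, R v = bellObj δ u F vlo R P v y) ∧
    ∃ tv : ℝ, IsGreatest (argmaxT δ u F vlo R P v) tv ∧
      uV (P v) v = δ * uV (env vlo P tv) v ∧
      ∀ p : ℝ, uV p v = δ * uV (env vlo P tv) v → p ≤ P v

lemma sqrt_add_le' (a b : ℝ) (ha : 0 ≤ a) (hb : 0 ≤ b) :
    Real.sqrt (a+b) ≤ Real.sqrt a + Real.sqrt b := by
  have h1 : a + b ≤ (Real.sqrt a + Real.sqrt b)^2 := by
    nlinarith [Real.sq_sqrt ha, Real.sq_sqrt hb, Real.sqrt_nonneg a, Real.sqrt_nonneg b]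
  calc Real.sqrt (a+b) ≤ Real.sqrt ((Real.sqrt a + Real.sqrt b)^2) := Real.sqrt_le_sqrt h1
    _ = _ := Real.sqrt_sq (by positivity)

/-- From the indifference condition, a pointwise bound on `P`. -/
lemma Pbound (δ : ℝ) (hδ : δ ∈ Set.Ioo (0:ℝ) 1) (u F : ℝ → ℝ) (vlo vstar : ℝ)
    (R P : ℝ → ℝ) (hsupp : SupportsSkimming δ u F vlo vstar R P) :
    ∀ v ∈ Set.Icc vlo vstar, ∃ tv ∈ Set.Icc vlo v,
      P v ≤ v + |v| + Real.sqrt δ * |v - env vlo P tv| := by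
  intro v hv
  obtain ⟨-, tv, htv, hUv, -⟩ := (hsupp.2.2 v hv)
  refine ⟨tv, htv.1.1, ?_⟩
  set q := env vlo P tv with hq
  have hsq : (v - P v)^2 = (1-δ)*v^2 + δ*(v-q)^2 := by
    unfold uV at hUv; linear_combination -hUv
  have h1 : P v - v ≤ Real.sqrt ((1-δ)*v^2 + δ*(v-q)^2) := by
    rw [← hsq, Real.sqrt_sq_eq_abs, abs_sub_comm]
    exact le_abs_self _
  have h2 : Real.sqrt ((1-δ)*v^2 + δ*(v-q)^2) ≤ |v| + Real.sqrt δ * |v - q| := by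
    have ha : (0:ℝ) ≤ (1-δ)*v^2 := by nlinarith [hδ.2, sq_nonneg v]
    have hb : (0:ℝ) ≤ δ*(v-q)^2 := by nlinarith [hδ.1, sq_nonneg (v-q)]
    calc Real.sqrt ((1-δ)*v^2 + δ*(v-q)^2)
        ≤ Real.sqrt ((1-δ)*v^2) + Real.sqrt (δ*(v-q)^2) := sqrt_add_le' _ _ ha hb
      _ ≤ |v| + Real.sqrt δ * |v - q| := by
          have e1 : Real.sqrt ((1-δ)*v^2) ≤ |v| := by
            calc Real.sqrt ((1-δ)*v^2) ≤ Real.sqrt (v^2) :=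
                  Real.sqrt_le_sqrt (by nlinarith [hδ.1, sq_nonneg v])
              _ = |v| := Real.sqrt_sq_eq_abs v
          have e2 : Real.sqrt (δ*(v-q)^2) = Real.sqrt δ * |v - q| := by
            rw [Real.sqrt_mul hδ.1.le, Real.sqrt_sq_eq_abs]
          linarith
  linarith

/-- `P` is bounded above on `[vlo, vstar]`. -/
lemma Pbdd (δ : ℝ) (hδ : δ ∈ Set.Ioo (0:ℝ) 1) (u F : ℝ → ℝ) (vlo vstar : ℝ)
    (R P : ℝ → ℝ) (hsupp : SupportsSkimming δ u F vlo vstar R P) :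
    BddAbove (P '' Set.Icc vlo vstar) := by
  set sδ := Real.sqrt δ with hsδ
  have hsδ0 : 0 ≤ sδ := Real.sqrt_nonneg δ
  have hsδ1 : sδ < 1 := by
    rw [hsδ, show (1:ℝ) = Real.sqrt 1 by simp]
    exact Real.sqrt_lt_sqrt hδ.1.le hδ.2
  set V := max |vlo| |vstar| with hV
  have hVv : ∀ v ∈ Set.Icc vlo vstar, |v| ≤ V := by
    intro v hv
    have h1 : vlo ≤ v := hv.1
    have h2 : v ≤ vstar := hv.2
    have := le_abs_self vstar
    have := neg_abs_le vlo
    have := le_max_left |vlo| |vstar|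
    have := le_max_right |vlo| |vstar|
    rw [abs_le]; constructor <;> linarith
  set p0 := P vlo with hp0
  set C0 := 3*V + |p0| with hC0
  set K := max 0 (C0/(1-sδ)) with hK
  have hK0 : 0 ≤ K := le_max_left _ _
  have claim1 : ∀ x ∈ Set.Icc vlo vstar, BddAbove (P '' Set.Icc vlo x) →
      sSup (P '' Set.Icc vlo x) ≤ K := by
    intro x hx hbdd
    set M := sSup (P '' Set.Icc vlo x) with hM
    have hne : (P '' Set.Icc vlo x).Nonempty := ⟨P vlo, vlo, ⟨le_refl _, hx.1⟩, rfl⟩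
    have hstep : ∀ v ∈ Set.Icc vlo x, P v ≤ C0 + sδ * max M 0 := by
      intro v hv
      have hvI : v ∈ Set.Icc vlo vstar := ⟨hv.1, hv.2.trans hx.2⟩
      obtain ⟨tv, htv, hb⟩ := Pbound δ hδ u F vlo vstar R P hsupp v hvI
      set q := env vlo P tv with hq
      have hsub : P '' Set.Icc vlo tv ⊆ P '' Set.Icc vlo x :=
        Set.image_mono (Set.Icc_subset_Icc le_rfl (htv.2.trans hv.2))
      have hqM : q ≤ M :=
        csSup_le_csSup hbdd ⟨P vlo, vlo, ⟨le_rfl, htv.1⟩, rfl⟩ hsub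
      have hq0 : p0 ≤ q := le_csSup (hbdd.mono hsub) ⟨vlo, ⟨le_rfl, htv.1⟩, rfl⟩
      have hqabs : |q| ≤ max M 0 + |p0| := by
        rcases le_total 0 q with h | h
        · have hqm : q ≤ max M 0 := hqM.trans (le_max_left _ _)
          rw [abs_of_nonneg h]
          have := abs_nonneg p0; linarith
        · rw [abs_of_nonpos h]
          have h1 : -p0 ≤ |p0| := neg_le_abs p0
          have h2 : (0:ℝ) ≤ max M 0 := le_max_right _ _
          linarith
      have habs : |v - q| ≤ |v| + (max M 0 + |p0|) := by
        calc |v - q| = |v + -q| := by ring_nf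
          _ ≤ |v| + |(-q)| := abs_add_le v (-q)
          _ = |v| + |q| := by rw [abs_neg]
          _ ≤ _ := by linarith
      have hvV := hVv v hvI
      have hm1 : sδ * |v - q| ≤ sδ * (|v| + (max M 0 + |p0|)) :=
        mul_le_mul_of_nonneg_left habs hsδ0
      have hm2 : sδ * |v| ≤ |v| := by nlinarith [abs_nonneg v]
      have hm3 : sδ * |p0| ≤ |p0| := by nlinarith [abs_nonneg p0]
      have hm4 : v ≤ |v| := le_abs_self v
      have hm5 : sδ * max M 0 ≤ 1 * max M 0 := by
        have : (0:ℝ) ≤ max M 0 := le_max_right _ _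
        nlinarith
      calc P v ≤ v + |v| + sδ * |v - q| := hb
        _ ≤ C0 + sδ * max M 0 := by rw [hC0]; nlinarith
    have hMle : M ≤ C0 + sδ * max M 0 := by
      apply csSup_le hne
      rintro p ⟨w, hw, rfl⟩; exact hstep w hw
    rcases le_or_gt M 0 with h | h
    · exact h.trans hK0
    · rw [max_eq_left h.le] at hMle
      have h1 : M * (1 - sδ) ≤ C0 := by nlinarith
      have h2 : M ≤ C0 / (1 - sδ) := (le_div_iff₀ (by linarith)).2 h1
      exact h2.trans (le_max_right _ _)
  refine ⟨C0 + sδ * K, ?_⟩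
  rintro p ⟨v, hv, rfl⟩
  obtain ⟨tv, htv, hb⟩ := Pbound δ hδ u F vlo vstar R P hsupp v hv
  have htvI : tv ∈ Set.Icc vlo vstar := ⟨htv.1, htv.2.trans hv.2⟩
  have hvV := hVv v hv
  have hm4 : v ≤ |v| := le_abs_self v
  by_cases hbd : BddAbove (P '' Set.Icc vlo tv)
  · have hqK : env vlo P tv ≤ K := claim1 tv htvI hbd
    have hq0 : p0 ≤ env vlo P tv := le_csSup hbd ⟨vlo, ⟨le_rfl, htv.1⟩, rfl⟩
    set q := env vlo P tv with hq
    have hqabs : |q| ≤ K + |p0| := by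
      rcases le_total 0 q with h | h
      · rw [abs_of_nonneg h]; have := abs_nonneg p0; linarith
      · rw [abs_of_nonpos h]
        have h1 : -p0 ≤ |p0| := neg_le_abs p0
        linarith
    have habs : |v - q| ≤ |v| + (K + |p0|) := by
      calc |v - q| = |v + -q| := by ring_nf
        _ ≤ |v| + |(-q)| := abs_add_le v (-q)
        _ = |v| + |q| := by rw [abs_neg]
        _ ≤ _ := by linarith
    have hm1 : sδ * |v - q| ≤ sδ * (|v| + (K + |p0|)) :=
      mul_le_mul_of_nonneg_left habs hsδ0
    have hm2 : sδ * |v| ≤ |v| := by nlinarith [abs_nonneg v]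
    have hm3 : sδ * |p0| ≤ |p0| := by nlinarith [abs_nonneg p0]
    calc P v ≤ v + |v| + sδ * |v - q| := hb
      _ ≤ C0 + sδ * K := by rw [hC0]; nlinarith
  · have hq : env vlo P tv = 0 := Real.sSup_of_not_bddAbove hbd
    rw [hq] at hb
    have hz : sδ * |v - 0| ≤ |v| := by
      rw [sub_zero]; nlinarith [abs_nonneg v]
    have hp0 : (0:ℝ) ≤ |p0| := abs_nonneg p0
    have hsk : 0 ≤ sδ * K := mul_nonneg hsδ0 hK0
    calc P v ≤ v + |v| + sδ * |v - 0| := hb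
      _ ≤ C0 + sδ * K := by rw [hC0]; nlinarith

/-- `R` is nonnegative on the interval. -/
lemma Rnonneg (δ : ℝ) (hδ : δ ∈ Set.Ioo (0:ℝ) 1) (u F : ℝ → ℝ) (vlo vstar : ℝ)
    (R P : ℝ → ℝ) (hsupp : SupportsSkimming δ u F vlo vstar R P) :
    ∀ w ∈ Set.Icc vlo vstar, 0 ≤ R w := by
  intro w hw
  obtain ⟨h1, tw, htw, -, -⟩ := hsupp.2.2 w hw
  have hRw : R w = bellObj δ u F vlo R P w tw := h1 tw htw.1
  have hself : bellObj δ u F vlo R P w w ≤ bellObj δ u F vlo R P w tw :=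
    htw.1.2 w ⟨hw.1, le_refl w⟩
  have hww : bellObj δ u F vlo R P w w = δ * R w := by
    unfold bellObj; ring
  rw [hww, ← hRw] at hself
  nlinarith [hδ.1, hδ.2]

theorem stmt11 (δ : ℝ) (hδ : δ ∈ Set.Ioo (0:ℝ) 1) (u F : ℝ → ℝ)
    (vlo vstar : ℝ) (hlt : vlo < vstar) (R P : ℝ → ℝ)
    (hsupp : SupportsSkimming δ u F vlo vstar R P)
    (hFcont : ContinuousOn F (Set.Icc vlo vstar))
    (hFmono : StrictMonoOn F (Set.Icc vlo vstar))
    -- u is increasing and strictly positive on an interval containing the range of P̄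
    (hu : ∃ s : Set ℝ, s.OrdConnected ∧ (env vlo P) '' Set.Icc vlo vstar ⊆ s ∧
      MonotoneOn u s ∧ ∀ x ∈ s, 0 < u x) :
    ∀ v ∈ Set.Icc vlo vstar,
      ∀ z ∈ argmaxT δ u F vlo R P v, ∀ y ∈ argmaxT δ u F vlo R P v,
        z < y → env vlo P z < env vlo P y := by
  obtain ⟨s, -, hsub, humono, hupos⟩ := hu
  have hbdd : BddAbove (P '' Set.Icc vlo vstar) := Pbdd δ hδ u F vlo vstar R P hsupp
  have hmono : ∀ x1 x2, vlo ≤ x1 → x1 ≤ x2 → x2 ≤ vstar →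
      env vlo P x1 ≤ env vlo P x2 := by
    intro x1 x2 h1 h2 h3
    apply csSup_le_csSup
    · exact hbdd.mono (Set.image_mono (Set.Icc_subset_Icc le_rfl h3))
    · exact ⟨P vlo, vlo, ⟨le_rfl, h1⟩, rfl⟩
    · exact Set.image_mono (Set.Icc_subset_Icc le_rfl h2)
  have hRnn := Rnonneg δ hδ u F vlo vstar R P hsupp
  intro v hv z hz y hy hzy
  by_contra hcon
  push_neg at hcon
  have hzv : z ∈ Set.Icc vlo v := hz.1
  have hyv : y ∈ Set.Icc vlo v := hy.1
  have hzI : z ∈ Set.Icc vlo vstar := ⟨hzv.1, hzv.2.trans hv.2⟩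
  have hyI : y ∈ Set.Icc vlo vstar := ⟨hyv.1, hyv.2.trans hv.2⟩
  have henveq : env vlo P z = env vlo P y :=
    le_antisymm (hmono z y hzI.1 hzy.le hyI.2) hcon
  set c := u (env vlo P y) with hc
  have hcpos : 0 < c := hupos _ (hsub ⟨y, hyI, rfl⟩)
  have hFzy : F z < F y := hFmono hzI hyI hzy
  obtain ⟨h1v, -⟩ := hsupp.2.2 v hv
  have hRvz : R v = bellObj δ u F vlo R P v z := h1v z hz
  have hRvy : R v = bellObj δ u F vlo R P v y := h1v y hy
  have hE : δ * (R y - R z) = c * (F y - F z) := by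
    have h := hRvz.symm.trans hRvy
    unfold bellObj at h
    rw [henveq] at h
    rw [hc]; linarith [h]
  have hEpos : 0 < c * (F y - F z) := mul_pos hcpos (by linarith)
  have hRz0 : 0 ≤ R z := hRnn z hzI
  -- the greatest maximizer of the problem at y
  obtain ⟨h1y, t, htg, -, -⟩ := hsupp.2.2 y hyI
  have htmem := htg.1
  have hty : t ≤ y := htmem.1.2
  have htlo : vlo ≤ t := htmem.1.1
  have htI : t ∈ Set.Icc vlo vstar := ⟨htlo, hty.trans hyI.2⟩
  have hRt0 : 0 ≤ R t := hRnn t htI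
  have hRy : R y = bellObj δ u F vlo R P y t := h1y t htmem
  have hRyz : bellObj δ u F vlo R P y z ≤ R y := by
    rw [hRy]; exact htmem.2 z ⟨hzI.1, hzy.le⟩
  have hRyz' : c * (F y - F z) + δ * R z ≤ R y := by
    have h : bellObj δ u F vlo R P y z = c * (F y - F z) + δ * R z := by
      unfold bellObj; rw [henveq, ← hc]
    linarith [hRyz, h.symm.le, h.le]
  rcases eq_or_lt_of_le hty with heq | hlt'
  · -- t = y : R y = δ R y, so R y = 0, contradicting R y ≥ c(Fy−Fz)+δRz > 0
    have hByy : bellObj δ u F vlo R P y y = δ * R y := by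
      unfold bellObj; ring
    have hRyy : R y = δ * R y := by
      have h := hRy
      rw [heq, hByy] at h
      exact h
    have hRypos : 0 < R y := by
      linarith [hRyz', hEpos, mul_nonneg hδ.1.le hRz0]
    nlinarith [hRyy, hRypos, hδ.2]
  · -- t < y
    have hFty : F t < F y := hFmono htI hyI hlt'
    set C := u (env vlo P t) with hC
    have hCpos : 0 < C := hupos _ (hsub ⟨t, htI, rfl⟩)
    have hRyt : R y = C * (F y - F t) + δ * R t := by
      rw [hRy]; unfold bellObj; rw [← hC]
    rcases le_or_gt t z with htz | hzt
    · -- t ≤ z : use feasibility of t at z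
      have hCc : C ≤ c := by
        have h := humono (hsub ⟨t, htI, rfl⟩) (hsub ⟨z, hzI, rfl⟩)
          (hmono t z htlo htz hzI.2)
        rw [hC, hc, ← henveq]; exact h
      obtain ⟨h1z, tz, htzg, -, -⟩ := hsupp.2.2 z hzI
      have hRz : R z = bellObj δ u F vlo R P z tz := h1z tz htzg.1
      have hRzt : bellObj δ u F vlo R P z t ≤ R z := by
        rw [hRz]; exact htzg.1.2 t ⟨htlo, htz⟩
      have h2 : C * (F z - F t) + δ * R t ≤ R z := by
        have h : bellObj δ u F vlo R P z t = C * (F z - F t) + δ * R t := by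
          unfold bellObj; rw [← hC]
        linarith [hRzt, h.le]
      have w1 : C * (F y - F z) ≤ c * (F y - F z) :=
        mul_le_mul_of_nonneg_right hCc (by linarith)
      have w2 : R y - R z ≤ C * (F y - F z) := by nlinarith [hRyt, h2]
      have w3 : δ * (R y - R z) ≤ δ * (c * (F y - F z)) :=
        mul_le_mul_of_nonneg_left (w2.trans w1) hδ.1.le
      have w4 : δ * (c * (F y - F z)) < 1 * (c * (F y - F z)) :=
        mul_lt_mul_of_pos_right hδ.2 hEpos
      linarith [hE, w3, w4]
    · -- z < t < y : env t = env y, use feasibility of t at v and optimality of y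
      have hCc : C = c := by
        have h1 := hmono z t hzI.1 hzt.le htI.2
        have h2 := hmono t y htlo hlt'.le hyI.2
        have he : env vlo P t = env vlo P y := le_antisymm h2 (henveq ▸ h1)
        rw [hC, hc, he]
      have htv : t ∈ Set.Icc vlo v := ⟨htlo, hlt'.le.trans hyv.2⟩
      have hmax : bellObj δ u F vlo R P v t ≤ bellObj δ u F vlo R P v y := hy.2 t htv
      have hmax' : C * (F v - F t) + δ * R t ≤ c * (F v - F y) + δ * R y := by
        have ha : bellObj δ u F vlo R P v t = C * (F v - F t) + δ * R t := by
          unfold bellObj; rw [← hC]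
        have hb : bellObj δ u F vlo R P v y = c * (F v - F y) + δ * R y := by
          unfold bellObj; rw [← hc]
        linarith [hmax, ha.le, hb.le]
      rw [hCc] at hmax' hRyt
      have key : δ * R y = δ * (c * (F y - F t)) + δ * (δ * R t) := by
        rw [hRyt]; ring
      -- (1-δ)·c·(Fy−Ft) + δ(1−δ)·Rt ≤ 0, contradiction
      have m1 : δ * (c * (F y - F t)) < 1 * (c * (F y - F t)) :=
        mul_lt_mul_of_pos_right hδ.2 (mul_pos hcpos (sub_pos.2 hFty))
      have m2 : δ * (δ * R t) ≤ 1 * (δ * R t) :=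
        mul_le_mul_of_nonneg_right hδ.2.le (mul_nonneg hδ.1.le hRt0)
      linarith [hmax', key, m1, m2]
end
end

section
/- Suppose (R,P) supports a skimming equilibrium on [v̲,v*] with δ∈(0,1). Then P(v) ≥ v for all v∈[v̲,v*]. If moreover v̲ > 0, then P(v̲) = 2v̲ and P(v) ≥ max{v, 2v̲} for all v∈[v̲,v*]. -/
noncomputable section

theorem stmt13 (δ : ℝ) (hδ : δ ∈ Set.Ioo (0:ℝ) 1) (u F : ℝ → ℝ)
    (vlo vstar : ℝ) (hlt : vlo < vstar) (R P : ℝ → ℝ)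
    (hsupp : SupportsSkimming δ u F vlo vstar R P) :
    (∀ v ∈ Set.Icc vlo vstar, v ≤ P v) ∧
    (0 < vlo →
      P vlo = 2 * vlo ∧ ∀ v ∈ Set.Icc vlo vstar, max v (2 * vlo) ≤ P v) := by
  obtain ⟨hδ0, hδ1⟩ := hδ
  obtain ⟨hRcont, hPcont, hmain⟩ := hsupp
  have part1 : ∀ v ∈ Set.Icc vlo vstar, v ≤ P v := by
    intro v hv
    obtain ⟨-, tv, htv, heq, hmax⟩ := hmain v hv
    have hrefl : uV (2 * v - P v) v = δ * uV (env vlo P tv) v := by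
      rw [← heq]; unfold uV; ring
    have h2 := hmax (2 * v - P v) hrefl
    linarith
  refine ⟨part1, fun hvlo => ?_⟩
  have hvlomem : vlo ∈ Set.Icc vlo vstar := ⟨le_refl _, hlt.le⟩
  have hPlo : P vlo = 2 * vlo := by
    obtain ⟨-, tv, htv, heq, hmax⟩ := hmain vlo hvlomem
    have htvI : tv ∈ Set.Icc vlo vlo := htv.1.1
    have htv' : tv = vlo := le_antisymm htvI.2 htvI.1
    have henv : env vlo P tv = P vlo := by
      rw [htv']; unfold env
      rw [Set.Icc_self, Set.image_singleton, csSup_singleton]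
    rw [henv] at heq hmax
    have h0 : uV (P vlo) vlo = 0 := by
      have h1 : (1 - δ) * uV (P vlo) vlo = 0 := by linear_combination heq
      have h2 : (1 - δ) ≠ 0 := by linarith
      exact (mul_eq_zero.mp h1).resolve_left h2
    have h2 : 2 * vlo ≤ P vlo := by
      apply hmax
      rw [h0]; unfold uV; ring
    have h3 : -(vlo - P vlo)^2 + vlo^2 = 0 := h0
    nlinarith [h3, h2, hvlo]
  refine ⟨hPlo, fun v hv => ?_⟩
  have hPv := part1 v hv
  rcases le_or_gt (2 * vlo) v with h | h
  · exact max_le hPv (h.trans hPv)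
  obtain ⟨-, tv, htv, heq, hmax⟩ := hmain v hv
  have htvI : tv ∈ Set.Icc vlo v := htv.1.1
  set E := env vlo P tv with hEdef
  have hEbound : (2 * vlo - v)^2 ≤ (v - E)^2 := by
    by_cases hbdd : BddAbove (P '' Set.Icc vlo tv)
    · have hmem : P vlo ∈ P '' Set.Icc vlo tv :=
        ⟨vlo, ⟨le_refl _, htvI.1⟩, rfl⟩
      have hE : P vlo ≤ E := le_csSup hbdd hmem
      rw [hPlo] at hE
      nlinarith [hE, h, hv.1]
    · have hE : E = 0 := Real.sSup_of_not_bddAbove hbdd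
      nlinarith [hE, hv.1, hvlo]
  have heq' : -(v - P v)^2 + v^2 = δ * (-(v - E)^2 + v^2) := heq
  have hv2 : (2 * vlo - v)^2 ≤ v^2 := by nlinarith [hv.1, hvlo]
  have key : (2 * vlo - v)^2 ≤ (P v - v)^2 := by
    nlinarith [heq', hEbound, hv2, hδ0.le, hδ1.le]
  have hfin : 2 * vlo ≤ P v := by nlinarith [key, hPv, h]
  exact max_le hPv hfin
end
end

section
/- Let δ∈(0,1), μ^δ∈(0,1), and A,B > 0. For μ∈(0,1) define r(μ) := μ^δ(1−μ)/((1−μ^δ)μ) and G(μ) := [(1−μ)·A + μ·δ·B] − [(1−μ)·δ·A + μ·(1 − r(μ) + r(μ)·δ²)·B]. Then G is an affine, strictly decreasing function of μ on (0,1), G(μ^δ) > 0, and lim_{μ→1⁻} G(μ) = −(1−δ)B < 0; hence G has a unique zero μ̄ in (0,1), and μ̄ > μ^δ. -/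
noncomputable section

/-- The high type's rejection probability bringing the posterior down to `μ^δ`:
`r(μ) = μ^δ(1−μ)/((1−μ^δ)μ)`. -/
noncomputable def rProb (mud μ : ℝ) : ℝ := mud * (1 - μ) / ((1 - mud) * μ)

/-- The difference between Proposer's payoff from leapfrogging at belief `μ`
and his payoff from offering action 1 first. -/
noncomputable def Gfun (δ mud A B μ : ℝ) : ℝ :=
  ((1 - μ) * A + μ * δ * B) -
    ((1 - μ) * δ * A + μ * (1 - rProb mud μ + rProb mud μ * δ^2) * B)

theorem stmt18 (δ mud A B : ℝ)
    (hδ : δ ∈ Set.Ioo (0:ℝ) 1) (hmud : mud ∈ Set.Ioo (0:ℝ) 1)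
    (hA : 0 < A) (hB : 0 < B) :
    -- G is affine and strictly decreasing in μ on (0,1)
    (∃ α β : ℝ, β < 0 ∧ ∀ μ ∈ Set.Ioo (0:ℝ) 1, Gfun δ mud A B μ = α + β * μ) ∧
    StrictAntiOn (Gfun δ mud A B) (Set.Ioo (0:ℝ) 1) ∧
    -- G(μ^δ) > 0
    0 < Gfun δ mud A B mud ∧
    -- lim_{μ→1⁻} G(μ) = −(1−δ)B < 0
    Filter.Tendsto (Gfun δ mud A B) (nhdsWithin 1 (Set.Iio 1))
      (nhds (-(1 - δ) * B)) ∧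
    -(1 - δ) * B < 0 ∧
    -- hence G has a unique zero μ̄ ∈ (0,1), and μ̄ > μ^δ
    (∃! μ : ℝ, μ ∈ Set.Ioo (0:ℝ) 1 ∧ Gfun δ mud A B μ = 0) ∧
    (∀ μ ∈ Set.Ioo (0:ℝ) 1, Gfun δ mud A B μ = 0 → mud < μ) := by
  obtain ⟨hδ0, hδ1⟩ := hδ
  obtain ⟨hm0, hm1⟩ := hmud
  have hm1' : (0:ℝ) < 1 - mud := by linarith
  set K : ℝ := (1 - δ) * A + (1 - δ^2) * mud * B / (1 - mud) with hK
  have hK0 : 0 < K := by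
    have hδ2 : 0 < 1 - δ^2 := by nlinarith
    have h1 : 0 < (1 - δ^2) * mud * B / (1 - mud) := by positivity
    have h2 : 0 < (1 - δ) * A := mul_pos (by linarith) hA
    rw [hK]; linarith
  have hβ0 : -(K + (1 - δ) * B) < 0 := by nlinarith
  have haff : ∀ μ ∈ Set.Ioo (0:ℝ) 1,
      Gfun δ mud A B μ = K + (-(K + (1 - δ) * B)) * μ := by
    intro μ ⟨hμ0, hμ1⟩
    simp only [Gfun, rProb, hK]
    field_simp
    ring
  have hGmud : 0 < Gfun δ mud A B mud := by
    rw [haff mud ⟨hm0, hm1⟩]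
    have : K + (-(K + (1 - δ) * B)) * mud = (1 - mud) * K - (1 - δ) * mud * B := by ring
    rw [this, hK]
    have hKe : (1 - mud) * ((1 - δ) * A + (1 - δ^2) * mud * B / (1 - mud))
        = (1 - δ) * (1 - mud) * A + (1 - δ^2) * mud * B := by
      field_simp
    rw [hKe]
    nlinarith [mul_pos (mul_pos (show (0:ℝ) < 1 - δ by linarith) hm1') hA,
      mul_pos (mul_pos (mul_pos (show (0:ℝ) < 1 - δ by linarith) hδ0) hm0) hB]
  have hanti : StrictAntiOn (Gfun δ mud A B) (Set.Ioo (0:ℝ) 1) := by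
    intro x hx y hy hxy
    rw [haff x hx, haff y hy]
    nlinarith [hxy, hβ0]
  refine ⟨⟨K, -(K + (1 - δ) * B), hβ0, haff⟩, hanti, hGmud, ?_, by nlinarith, ?_, ?_⟩
  · -- limit
    have hmem : Set.Ioo (0:ℝ) 1 ∈ nhdsWithin (1:ℝ) (Set.Iio 1) :=
      Ioo_mem_nhdsLT_of_mem (by constructor <;> norm_num)
    have hlin : Filter.Tendsto (fun μ : ℝ => K + (-(K + (1 - δ) * B)) * μ)
        (nhdsWithin 1 (Set.Iio 1)) (nhds (-(1 - δ) * B)) := by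
      have : Filter.Tendsto (fun μ : ℝ => K + (-(K + (1 - δ) * B)) * μ)
          (nhds 1) (nhds (K + (-(K + (1 - δ) * B)) * 1)) := by
        exact (Continuous.tendsto (by continuity) 1)
      have h1 : K + (-(K + (1 - δ) * B)) * 1 = -(1 - δ) * B := by ring
      rw [h1] at this
      exact this.mono_left nhdsWithin_le_nhds
    refine hlin.congr' ?_
    filter_upwards [hmem] with μ hμ using (haff μ hμ).symm
  · -- unique zero
    set μ0 : ℝ := K / (K + (1 - δ) * B) with hμ0def
    have hden : 0 < K + (1 - δ) * B := by nlinarith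
    have hμ0mem : μ0 ∈ Set.Ioo (0:ℝ) 1 := by
      constructor
      · positivity
      · rw [hμ0def, div_lt_one hden]; nlinarith
    refine ⟨μ0, ⟨hμ0mem, ?_⟩, ?_⟩
    · rw [haff μ0 hμ0mem, hμ0def]
      field_simp
      ring
    · rintro μ ⟨hμmem, hμzero⟩
      rw [haff μ hμmem] at hμzero
      rw [hμ0def]
      field_simp
      linarith [hμzero]
  · intro μ hμmem hzero
    by_contra h
    push_neg at h
    rcases eq_or_lt_of_le h with heq | hlt
    · rw [heq] at hzero; linarith
    · have := hanti hμmem ⟨hm0, hm1⟩ hlt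
      linarith
end
end
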